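/- Let G be a finite group, F a splitting field for G of characteristic 2, and let d_1, ..., d_ℓ be the dimensions of the irreducible FG-modules. Then d_1² + ... + d_ℓ² is odd. -/

import Mathlib

open Module

section Defs
variable {F : Type} [Field F] {G : Type} [Group G]
variable {V W : Type} [AddCommGroup V] [Module F V] [AddCommGroup W] [Module F W]

def IsSubrep (ρ : Representation F G V) (U : Submodule F V) : Prop :=
  ∀ (g : G), ∀ v ∈ U, ρ g v ∈ U

def IsIrred (ρ : Representation F G V) : Prop :=
  Nontrivial V ∧ ∀ U : Submodule F V, IsSubrep ρ U → U = ⊥ ∨ U = ⊤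

def RepIso (ρ : Representation F G V) (σ : Representation F G W) : Prop :=
  ∃ e : V ≃ₗ[F] W, ∀ (g : G) (v : V), e (ρ g v) = σ g (e v)

def IsSelfDual (ρ : Representation F G V) : Prop :=
  RepIso ρ ρ.dual

def IsTrivialRep (ρ : Representation F G V) : Prop := ∀ (g : G) (v : V), ρ g v = v

def EquivHom (σ : Representation F G W) (ρ : Representation F G V) :
    Submodule F (W →ₗ[F] V) where
  carrier := {f | ∀ (g : G) (w : W), f (σ g w) = ρ g (f w)}
  add_mem' := by
    intro f f' hf hf' g w
    simp [LinearMap.add_apply, hf g w, hf' g w]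
  zero_mem' := by intro g w; simp
  smul_mem' := by
    intro c f hf g w
    simp [LinearMap.smul_apply, hf g w]

noncomputable def repMult (σ : Representation F G W) (ρ : Representation F G V) : ℕ :=
  Module.finrank F (EquivHom σ ρ)

def BilinInvariant (ρ : Representation F G V) (B : V →ₗ[F] V →ₗ[F] F) : Prop :=
  ∀ (g : G) (v w : V), B (ρ g v) (ρ g w) = B v w

def Nondeg (B : V →ₗ[F] V →ₗ[F] F) : Prop := ∀ v : V, (∀ w : V, B v w = 0) → v = 0

def IsAltForm (B : V →ₗ[F] V →ₗ[F] F) : Prop := ∀ v : V, B v v = 0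

def PolarizesTo (Q : V → F) (B : V →ₗ[F] V →ₗ[F] F) : Prop :=
  (∀ (a : F) (v : V), Q (a • v) = a ^ 2 * Q v) ∧
    ∀ v w : V, Q (v + w) = Q v + B v w + Q w

def QuadInvariant (ρ : Representation F G V) (Q : V → F) : Prop :=
  ∀ (g : G) (v : V), Q (ρ g v) = Q v

def HasQuadType (ρ : Representation F G V) : Prop :=
  ∃ (Q : V → F) (B : V →ₗ[F] V →ₗ[F] F),
    PolarizesTo Q B ∧ QuadInvariant ρ Q ∧ Nondeg B

def IsSplitting (F G : Type) [Field F] [Group G] : Prop :=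
  ∀ (V : Type) [AddCommGroup V] [Module F V] (ρ : Representation F G V),
    FiniteDimensional F V → IsIrred ρ →
      ∀ f ∈ EquivHom ρ ρ, ∃ c : F, f = c • (LinearMap.id : V →ₗ[F] V)

structure RepOn (F G : Type) [Field F] [Group G] where
  carrier : Type
  [ag : AddCommGroup carrier]
  [md : Module F carrier]
  rep : Representation F G carrier

attribute [instance] RepOn.ag RepOn.md

end Defs

/-!
Duality is an involution on the irreducible modules preserving dimension, so the modules that are
not self-dual pair off and contribute an even amount. A self-dual irreducible `V` carries a
nondegenerate invariant bilinear form `B`. In characteristic 2 the form `B + Bᵗ` is alternating;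
if it is nonzero it is nondegenerate by irreducibility, and otherwise `B` is symmetric and its
isotropic vectors form an invariant subspace, which is either everything (then `B` itself is
alternating) or zero (then `ρ g x + x`, being isotropic, vanishes and `V` is trivial). As
nondegenerate alternating forms only exist in even dimension, the trivial module is the only
self-dual irreducible of odd dimension (Fong's lemma), and it contributes the one odd square.
-/

namespace LinearMap.BilinForm

open LinearMap (BilinForm)

variable {K V : Type*} [Field K] [AddCommGroup V] [Module K V]

theorem eq_zero_of_isAlt_of_apply_ne_zero {B : BilinForm K V} (hB : B.IsAlt) {v w : V}
    (hvw : B v w ≠ 0) {a b : K} (hv : B (a • v + b • w) v = 0)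
    (hw : B (a • v + b • w) w = 0) : a = 0 ∧ b = 0 := by
  have hwv : B w v ≠ 0 := by rw [← hB.neg_eq]; exact neg_ne_zero.2 hvw
  simp only [map_add, map_smul, LinearMap.add_apply, LinearMap.smul_apply, smul_eq_mul,
    hB.self_eq_zero, mul_zero, add_zero, zero_add] at hv hw
  exact ⟨(mul_eq_zero.1 hw).resolve_right hvw, (mul_eq_zero.1 hv).resolve_right hwv⟩

/-- Split off a hyperbolic plane `span {v, w}` with `B v w ≠ 0` and induct on its
orthogonal complement. -/
theorem even_finrank_of_isAlt_of_nondegenerate [FiniteDimensional K V] {B : BilinForm K V}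
    (hB : B.IsAlt) (hnd : B.Nondegenerate) : Even (finrank K V) := by
  induction hn : finrank K V using Nat.strong_induction_on generalizing V with
  | _ n ih =>
  rcases n.eq_zero_or_pos with rfl | hpos
  · exact ⟨0, rfl⟩
  have : Nontrivial V := Module.nontrivial_of_finrank_pos (hn ▸ hpos)
  obtain ⟨v, hv⟩ := exists_ne (0 : V)
  obtain ⟨w, hvw⟩ : ∃ w, B v w ≠ 0 := not_forall.1 fun h => hv (hnd.1 v h)
  have hP : finrank K (Submodule.span K {v, w}) = 2 := by
    have hli : LinearIndependent K ![v, w] := LinearIndependent.pair_iff.2 fun a b hab =>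
      eq_zero_of_isAlt_of_apply_ne_zero hB hvw (by rw [hab]; simp) (by rw [hab]; simp)
    rw [← Matrix.range_cons_cons_empty v w ![], finrank_span_eq_card hli, Fintype.card_fin]
  set P := Submodule.span K {v, w}
  have hPnd : (B.restrict P).Nondegenerate := by
    refine .ofSeparatingLeft fun ⟨x, hx⟩ hx0 => ?_
    obtain ⟨a, b, rfl⟩ := Submodule.mem_span_pair.1 hx
    obtain ⟨rfl, rfl⟩ := eq_zero_of_isAlt_of_apply_ne_zero hB hvw
      (hx0 ⟨v, Submodule.subset_span (by simp)⟩) (hx0 ⟨w, Submodule.subset_span (by simp)⟩)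
    simp
  have hcompl := isCompl_orthogonal_of_restrict_nondegenerate hB.isRefl hPnd
  set O := B.orthogonal P
  have hOnd : (B.restrict O).Nondegenerate :=
    nondegenerate_restrict_of_disjoint_orthogonal B hB.isRefl
      (by rw [orthogonal_orthogonal hnd hB.isRefl]; exact hcompl.disjoint.symm)
  have hO : finrank K O + 2 = n := by
    rw [← hP, add_comm, ← hn, Submodule.finrank_add_eq_of_isCompl hcompl]
  rw [← hO]
  exact (ih _ (by omega) (B := B.restrict O) (fun x => hB x) hOnd rfl).add even_two

end LinearMap.BilinForm

theorem Representation.dual_apply_apply {k G V : Type*} [CommSemiring k] [Group G]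
    [AddCommMonoid V] [Module k V] (ρ : Representation k G V) (g : G) (f : Module.Dual k V)
    (v : V) : ρ.dual g f v = f (ρ g⁻¹ v) :=
  rfl

section Representations

variable {F G V W X : Type} [Field F] [Group G] [AddCommGroup V] [Module F V]
  [AddCommGroup W] [Module F W] [AddCommGroup X] [Module F X]
  {ρ : Representation F G V} {τ : Representation F G W}

namespace RepIso

theorem symm (h : RepIso ρ τ) : RepIso τ ρ := by
  obtain ⟨e, he⟩ := h
  exact ⟨e.symm, fun g w => e.injective (by simp [he])⟩

theorem trans {υ : Representation F G X} (h : RepIso ρ τ) (h' : RepIso τ υ) : RepIso ρ υ := by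
  obtain ⟨e, he⟩ := h
  obtain ⟨e', he'⟩ := h'
  exact ⟨e.trans e', fun g v => by simp [he, he']⟩

theorem finrank_eq (h : RepIso ρ τ) : finrank F V = finrank F W :=
  h.elim fun e _ => e.finrank_eq

theorem dual (h : RepIso ρ τ) : RepIso ρ.dual τ.dual := by
  obtain ⟨e, he⟩ := h
  refine ⟨e.symm.dualMap, fun g f => LinearMap.ext fun w => ?_⟩
  simp only [LinearEquiv.dualMap_apply, Representation.dual_apply_apply]
  congr 1
  exact e.injective (by simp [he])

end RepIso

theorem repIso_dual_dual [FiniteDimensional F V] (ρ : Representation F G V) :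
    RepIso ρ ρ.dual.dual :=
  ⟨Module.evalEquiv F V, fun g v => LinearMap.ext fun f => by
    simp only [Module.evalEquiv_apply, Representation.dual_apply_apply, Module.Dual.eval_apply,
      inv_inv]⟩

theorem IsIrred.dual [FiniteDimensional F V] (h : IsIrred ρ) : IsIrred ρ.dual := by
  obtain ⟨hnt, hsub⟩ := h
  have : 0 < finrank F (Module.Dual F V) := by rw [Subspace.dual_finrank_eq]; exact finrank_pos
  refine ⟨Module.nontrivial_of_finrank_pos this, fun U hU => ?_⟩
  have hco : IsSubrep ρ U.dualCoannihilator := fun g v hv => by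
    simp only [Submodule.mem_dualCoannihilator] at hv ⊢
    intro f hf
    simpa only [Representation.dual_apply_apply, inv_inv] using hv _ (hU g⁻¹ f hf)
  have hdim := Subspace.finrank_add_finrank_dualCoannihilator_eq U
  rcases hsub _ hco with h | h <;> rw [h] at hdim
  · exact .inr (Submodule.eq_top_of_finrank_eq (by simpa [Subspace.dual_finrank_eq] using hdim))
  · exact .inl (Submodule.finrank_eq_zero.1 (by simpa using hdim))

theorem isIrred_trivial : IsIrred (Representation.trivial F G F) :=
  ⟨inferInstance, fun U _ => Ideal.eq_bot_or_top U⟩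

theorem IsTrivialRep.of_repIso (hρ : IsTrivialRep ρ) (h : RepIso ρ τ) : IsTrivialRep τ := by
  obtain ⟨e, he⟩ := h
  intro g w
  simpa [hρ g] using (he g (e.symm w)).symm

theorem IsTrivialRep.dual (hρ : IsTrivialRep ρ) : IsTrivialRep ρ.dual := fun g f =>
  LinearMap.ext fun v => by rw [Representation.dual_apply_apply, hρ]

theorem IsTrivialRep.repIso [FiniteDimensional F V] [FiniteDimensional F W]
    (hρ : IsTrivialRep ρ) (hτ : IsTrivialRep τ) (h : finrank F V = finrank F W) :
    RepIso ρ τ := by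
  obtain ⟨e⟩ := FiniteDimensional.nonempty_linearEquiv_of_finrank_eq h
  exact ⟨e, fun g v => by rw [hρ, hτ]⟩

theorem IsTrivialRep.isSelfDual [FiniteDimensional F V] (hρ : IsTrivialRep ρ) :
    IsSelfDual ρ :=
  hρ.repIso hρ.dual Subspace.dual_finrank_eq.symm

theorem IsTrivialRep.finrank_eq_one (hρ : IsTrivialRep ρ) (hirr : IsIrred ρ) :
    finrank F V = 1 := by
  obtain ⟨hnt, hsub⟩ := hirr
  obtain ⟨v, hv⟩ := exists_ne (0 : V)
  have hline : IsSubrep ρ (F ∙ v) := fun g w hw => by rwa [hρ]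
  rcases hsub _ hline with h | h
  · exact absurd (Submodule.span_singleton_eq_bot.1 h) hv
  · rw [← finrank_top F V, ← h, finrank_span_singleton hv]

end Representations

namespace LinearMap.BilinForm

open LinearMap (BilinForm)

variable {K V : Type*} [Field K] [CharP K 2] [AddCommGroup V] [Module K V] {B : BilinForm K V}

theorem isAlt_add_flip (B : BilinForm K V) : (B + B.flip).IsAlt := fun x =>
  CharTwo.add_self_eq_zero (B x x)

theorem isSymm_of_add_flip_eq_zero (h : B + B.flip = 0) : B.IsSymm :=
  ⟨fun x y => CharTwo.add_eq_zero.1 (LinearMap.congr_fun₂ h x y)⟩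

/-- In characteristic 2, `x ↦ B x x` is additive for symmetric `B`, so its zeros form a
subspace. -/
def isotropicSubmodule (hB : B.IsSymm) : Submodule K V where
  carrier := {x | B x x = 0}
  add_mem' {x y} (hx : B x x = 0) (hy : B y y = 0) := show B (x + y) (x + y) = 0 by
    simp only [map_add, LinearMap.add_apply]
    rw [hx, hy, hB.eq y x, zero_add, add_zero, CharTwo.add_self_eq_zero]
  zero_mem' := by simp
  smul_mem' c x hx := by simp_all

theorem mem_isotropicSubmodule (hB : B.IsSymm) {x : V} :
    x ∈ isotropicSubmodule hB ↔ B x x = 0 :=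
  Iff.rfl

end LinearMap.BilinForm

section InvariantForms

open LinearMap.BilinForm

variable {F G V : Type} [Field F] [Group G] [AddCommGroup V] [Module F V]
  {ρ : Representation F G V} {B : LinearMap.BilinForm F V}

theorem IsSelfDual.exists_bilinInvariant (h : IsSelfDual ρ) :
    ∃ B : LinearMap.BilinForm F V, BilinInvariant ρ B ∧ LinearMap.ker B = ⊥ := by
  obtain ⟨e, he⟩ := h
  refine ⟨e.toLinearMap, fun g v w => ?_, e.ker⟩
  rw [LinearEquiv.coe_coe, he, Representation.dual_apply_apply, Representation.inv_self_apply]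

theorem BilinInvariant.add_flip (hB : BilinInvariant ρ B) : BilinInvariant ρ (B + B.flip) :=
  fun g v w => congrArg₂ (· + ·) (hB g v w) (hB g w v)

theorem BilinInvariant.isSubrep_ker (hB : BilinInvariant ρ B) : IsSubrep ρ (LinearMap.ker B) :=
  fun g v hv => LinearMap.ext fun w => by
    rw [LinearMap.mem_ker] at hv
    simpa [hv] using hB g v (ρ g⁻¹ w)

theorem IsIrred.eq_zero_or_ker_eq_bot (hρ : IsIrred ρ) (hB : BilinInvariant ρ B) :
    B = 0 ∨ LinearMap.ker B = ⊥ :=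
  (hρ.2 _ hB.isSubrep_ker).symm.imp LinearMap.ker_eq_top.1 id

variable [CharP F 2]

theorem BilinInvariant.isSubrep_isotropicSubmodule (hB : BilinInvariant ρ B) (hs : B.IsSymm) :
    IsSubrep ρ (isotropicSubmodule hs) := fun g v hv => by
  rwa [mem_isotropicSubmodule, hB]

theorem BilinInvariant.isTrivialRep (hB : BilinInvariant ρ B) (hs : B.IsSymm)
    (h : isotropicSubmodule hs = ⊥) : IsTrivialRep ρ := fun g x => by
  have hiso : ρ g x + x ∈ isotropicSubmodule hs := by
    rw [mem_isotropicSubmodule]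
    simp only [map_add, LinearMap.add_apply]
    rw [hB, hs.eq (ρ g x) x, add_comm (B x (ρ g x)) (B x x), CharTwo.add_self_eq_zero]
  rw [h, Submodule.mem_bot] at hiso
  rw [eq_neg_of_add_eq_zero_left hiso, ← neg_one_smul F x, CharTwo.neg_eq, one_smul]

theorem IsIrred.even_finrank_or_isTrivialRep [FiniteDimensional F V] (hρ : IsIrred ρ)
    (hsd : IsSelfDual ρ) : Even (finrank F V) ∨ IsTrivialRep ρ := by
  obtain ⟨B, hB, hker⟩ := hsd.exists_bilinInvariant
  rcases hρ.eq_zero_or_ker_eq_bot hB.add_flip with hC | hC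
  · have hs := isSymm_of_add_flip_eq_zero hC
    rcases hρ.2 _ (hB.isSubrep_isotropicSubmodule hs) with hQ | hQ
    · exact .inr (hB.isTrivialRep hs hQ)
    · refine .inl (even_finrank_of_isAlt_of_nondegenerate (B := B) (fun x => ?_)
        (nondegenerate_iff_ker_eq_bot.2 hker))
      exact (mem_isotropicSubmodule hs).1 (hQ ▸ Submodule.mem_top)
  · exact .inl (even_finrank_of_isAlt_of_nondegenerate (isAlt_add_flip B)
      (nondegenerate_iff_ker_eq_bot.2 hC))

end InvariantForms

theorem odd_sum_of_involutive {ι : Type*} [Fintype ι] {t : ι → ι} (ht : Function.Involutive t)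
    {d : ι → ℕ} (hd : ∀ i, d (t i) = d i) {i₀ : ι} (hi₀ : t i₀ = i₀) (hodd : Odd (d i₀))
    (heven : ∀ i, t i = i → i ≠ i₀ → Even (d i)) : Odd (∑ i, d i) := by
  classical
  rw [← ZMod.natCast_eq_one_iff_odd, Nat.cast_sum,
    ← Finset.sum_filter_add_sum_filter_not Finset.univ (fun i => t i = i)]
  have hfixed : ∑ i ∈ Finset.univ.filter (fun i => t i = i), (d i : ZMod 2) = 1 := by
    rw [Finset.sum_eq_single_of_mem i₀ (by simp [hi₀]), ZMod.natCast_eq_one_iff_odd.2 hodd]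
    intro i hi hne
    exact ZMod.natCast_eq_zero_iff_even.2 (heven i (Finset.mem_filter.1 hi).2 hne)
  have hpaired : ∑ i ∈ Finset.univ.filter (fun i => t i ≠ i), (d i : ZMod 2) = 0 :=
    Finset.sum_involution (fun i _ => t i)
      (fun i _ => by rw [hd]; exact CharTwo.add_self_eq_zero _)
      (fun i hi _ => (Finset.mem_filter.1 hi).2)
      (fun i hi => by simpa [ht i, eq_comm] using hi)
      (fun i _ => ht i)
  rw [hfixed, hpaired, add_zero]

theorem stmt_3_general {F : Type} [Field F] [CharP F 2] {G : Type} [Group G]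
    {ι : Type} [Fintype ι] {V : ι → Type} [∀ i, AddCommGroup (V i)] [∀ i, Module F (V i)]
    (σ : ∀ i, Representation F G (V i))
    (hfd : ∀ i, FiniteDimensional F (V i)) (hirr : ∀ i, IsIrred (σ i))
    (hdist : ∀ i j, i ≠ j → ¬ RepIso (σ i) (σ j))
    (hcomplete : ∀ (W : Type) [AddCommGroup W] [Module F W] (τ : Representation F G W),
      FiniteDimensional F W → IsIrred τ → ∃ i, RepIso τ (σ i)) :
    Odd (∑ i, Module.finrank F (V i) ^ 2) := by
  have hinj : ∀ i j, RepIso (σ i) (σ j) → i = j := fun i j h => by_contra (hdist i j · h)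
  choose t ht using fun i => hcomplete _ (σ i).dual inferInstance (hirr i).dual
  have hinv : Function.Involutive t := fun i =>
    (hinj _ _ (((repIso_dual_dual _).trans (ht i).dual).trans (ht (t i)))).symm
  have hdim : ∀ i, finrank F (V (t i)) = finrank F (V i) := fun i => by
    rw [← (ht i).finrank_eq, Subspace.dual_finrank_eq]
  obtain ⟨i₀, hi₀⟩ := hcomplete F _ inferInstance (isIrred_trivial (G := G))
  have htriv₀ : IsTrivialRep (σ i₀) := IsTrivialRep.of_repIso (fun _ _ => rfl) hi₀
  have hdim₀ : finrank F (V i₀) = 1 := htriv₀.finrank_eq_one (hirr i₀)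
  refine odd_sum_of_involutive (d := fun i => finrank F (V i) ^ 2) (i₀ := i₀) hinv
    (fun i => by rw [hdim]) (hinj _ _ ?_).symm (by simp [hdim₀]) fun i hi hne => ?_
  · exact htriv₀.isSelfDual.trans (ht i₀)
  · have hsd : IsSelfDual (σ i) := by
      have h := (ht i).symm
      rwa [hi] at h
    rcases (hirr i).even_finrank_or_isTrivialRep hsd with heven | htriv
    · exact heven.pow_of_ne_zero two_ne_zero
    · have hdim_i : finrank F (V i) = finrank F (V i₀) := by
        rw [htriv.finrank_eq_one (hirr i), hdim₀]
      exact absurd (hinj _ _ (htriv.repIso htriv₀ hdim_i)) hne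

/-- over a splitting field of characteristic 2, the sum of the squares of the
dimensions of the irreducible FG-modules is odd. -/
theorem stmt_3 {F : Type} [Field F] [CharP F 2] {G : Type} [Group G] [Finite G]
    {ι : Type} [Fintype ι] {V : ι → Type} [∀ i, AddCommGroup (V i)] [∀ i, Module F (V i)]
    (σ : ∀ i, Representation F G (V i))
    (hfd : ∀ i, FiniteDimensional F (V i)) (hirr : ∀ i, IsIrred (σ i))
    (habs : ∀ i, ∀ f ∈ EquivHom (σ i) (σ i),
      ∃ c : F, f = c • (LinearMap.id : V i →ₗ[F] V i))
    (hdist : ∀ i j, i ≠ j → ¬ RepIso (σ i) (σ j))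
    (hcomplete : ∀ (W : Type) [AddCommGroup W] [Module F W] (τ : Representation F G W),
      FiniteDimensional F W → IsIrred τ → ∃ i, RepIso τ (σ i)) :
    Odd (∑ i, Module.finrank F (V i) ^ 2) :=
  stmt_3_general σ hfd hirr hdist hcomplete
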